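/- arXiv:2510.22307 — 2 statements merged into one kernel-verified Lean document; each statement's English description precedes it below -/
import Mathlib

section
/- Let f, g : {0,1}^n → ℝ. Then |E[fg] − E[f]E[g]| ≤ (1/4)·∑_{i=1}^n √(Inf_i[f]·Inf_i[g]), where Inf_i[h] = E[|h(x^{(i→1)}) − h(x^{(i→0)})|^2]. -/
open Finset MeasureTheory

/-- Expectation with respect to the uniform measure on `{0,1}^n`. -/
noncomputable def Ev (n : ℕ) (f : (Fin n → Bool) → ℝ) : ℝ :=
  (∑ x : Fin n → Bool, f x) / 2 ^ n

/-- `f` is increasing (monotone w.r.t. the coordinatewise order). -/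
def Increasing' (n : ℕ) (f : (Fin n → Bool) → ℝ) : Prop :=
  ∀ x y : Fin n → Bool, (∀ i, x i ≤ y i) → f x ≤ f y

/-- `f` is submodular: `f(x∧y) + f(x∨y) ≤ f(x) + f(y)`. -/
def Submodular' (n : ℕ) (f : (Fin n → Bool) → ℝ) : Prop :=
  ∀ x y : Fin n → Bool,
    f (fun i => x i && y i) + f (fun i => x i || y i) ≤ f x + f y

/-- `f` is supermodular: `f(x) + f(y) ≤ f(x∧y) + f(x∨y)`. -/
def Supermodular' (n : ℕ) (f : (Fin n → Bool) → ℝ) : Prop :=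
  ∀ x y : Fin n → Bool,
    f x + f y ≤ f (fun i => x i && y i) + f (fun i => x i || y i)

/-- Discrete derivative `∂_i f (x) = f(x^{(i→1)}) - f(x^{(i→0)})`. -/
noncomputable def pD (n : ℕ) (i : Fin n) (f : (Fin n → Bool) → ℝ) :
    (Fin n → Bool) → ℝ :=
  fun x => f (Function.update x i true) - f (Function.update x i false)

/-- Character `χ_S(x) = (-1)^{∑_{i ∈ S} x_i}`. -/
noncomputable def chi (n : ℕ) (S : Finset (Fin n)) (x : Fin n → Bool) : ℝ :=
  ∏ i ∈ S, (if x i then (-1 : ℝ) else 1)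

/-- Fourier--Walsh coefficient `f̂(S) = E[f · χ_S]`. -/
noncomputable def fhat (n : ℕ) (f : (Fin n → Bool) → ℝ) (S : Finset (Fin n)) : ℝ :=
  Ev n (fun x => f x * chi n S x)

/-- Heat semigroup `P_t f = ∑_S e^{-t|S|} f̂(S) χ_S`. -/
noncomputable def heat (n : ℕ) (t : ℝ) (f : (Fin n → Bool) → ℝ) :
    (Fin n → Bool) → ℝ :=
  fun x => ∑ S : Finset (Fin n), Real.exp (-(t * S.card)) * fhat n f S * chi n S x

/-- Influence of coordinate `i` on a Boolean (`{0,1}`-valued) function: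
`Inf_i[f] = P[f(x) ≠ f(x ⊕ e_i)]`. -/
noncomputable def InfB (n : ℕ) (i : Fin n) (f : (Fin n → Bool) → ℝ) : ℝ :=
  Ev n (fun x => if f x = f (Function.update x i (! x i)) then 0 else 1)

/-- `L¹`-influence `Inf_i^{(1)}[f] = E[|∂_i f|]`. -/
noncomputable def Inf1 (n : ℕ) (i : Fin n) (f : (Fin n → Bool) → ℝ) : ℝ :=
  Ev n (fun x => |pD n i f x|)

/-- `L²`-influence `Inf_i[f] = E[|∂_i f|²]` for real-valued `f`. -/
noncomputable def Inf2 (n : ℕ) (i : Fin n) (f : (Fin n → Bool) → ℝ) : ℝ :=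
  Ev n (fun x => |pD n i f x| ^ 2)

/-- Difference operator `D_i f (x) = f(x) - f(x ⊕ e_i)`. -/
noncomputable def Dop (n : ℕ) (i : Fin n) (f : (Fin n → Bool) → ℝ) :
    (Fin n → Bool) → ℝ :=
  fun x => f x - f (Function.update x i (! x i))

/-- `‖f‖_p = (E[|f|^p])^{1/p}` (also used as a quasi-norm for `0 < p < 1`). -/
noncomputable def nrm (n : ℕ) (p : ℝ) (f : (Fin n → Bool) → ℝ) : ℝ :=
  (Ev n (fun x => |f x| ^ p)) ^ (1 / p)

/-- Iterated discrete derivative along a list of coordinates. -/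
noncomputable def pDList (n : ℕ) : List (Fin n) → ((Fin n → Bool) → ℝ) → ((Fin n → Bool) → ℝ)
  | [], f => f
  | i :: l, f => pD n i (pDList n l f)

/-- `∂_T f = ∂_{i₁} ∘ ⋯ ∘ ∂_{i_d} f` for `T = {i₁ < ⋯ < i_d}` (the order is immaterial
since discrete derivatives along distinct coordinates commute). -/
noncomputable def pDT (n : ℕ) (T : Finset (Fin n)) (f : (Fin n → Bool) → ℝ) :
    (Fin n → Bool) → ℝ :=
  pDList n (T.sort (· ≤ ·)) f

/-!
Expand in the Walsh–Fourier basis `χ_S`. By Parseval the covariance is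
`∑_{S ≠ ∅} f̂(S) ĝ(S)`. Since `∂_i f = ± D_i f` with `D_i f(x) = f(x) - f(x ⊕ e_i)`, and
`D_i f` has coefficients `2 · 1[i ∈ S] f̂(S)`, we get `Inf_i[f] = 4 ∑_{S ∋ i} f̂(S)²`.
Every nonempty `S` contains some `i`, so the covariance is bounded by
`∑_i ∑_{S ∋ i} |f̂(S)| |ĝ(S)|`, and Cauchy–Schwarz on each `{S ∋ i}` finishes.
-/

lemma sum_erase_empty_le_sum_sum_filter_mem {ι : Type*} [Fintype ι] [DecidableEq ι]
    (c : Finset ι → ℝ) (hc : ∀ S, 0 ≤ c S) :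
    ∑ S ∈ univ.erase ∅, c S ≤ ∑ i, ∑ S ∈ univ.filter (i ∈ ·), c S := by
  calc ∑ S ∈ univ.erase ∅, c S ≤ ∑ S ∈ univ.erase ∅, #S * c S :=
        sum_le_sum fun S hS => le_mul_of_one_le_left (hc S) <| by
          exact_mod_cast card_pos.mpr (nonempty_iff_ne_empty.mpr (ne_of_mem_erase hS))
    _ ≤ ∑ S, #S * c S :=
        sum_le_sum_of_subset_of_nonneg (erase_subset _ _) fun S _ _ =>
          mul_nonneg (Nat.cast_nonneg _) (hc S)
    _ = ∑ i, ∑ S ∈ univ.filter (i ∈ ·), c S := by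
        simp only [sum_filter]
        rw [sum_comm]
        simp [sum_ite_mem]

section

variable {n : ℕ}

lemma chi_mul_chi (S : Finset (Fin n)) (y z : Fin n → Bool) :
    chi n S y * chi n S z = ∏ i ∈ S, (if y i = z i then 1 else -1 : ℝ) := by
  rw [chi, chi, ← prod_mul_distrib]
  refine prod_congr rfl fun i _ => ?_
  cases y i <;> cases z i <;> norm_num

lemma sum_chi_mul_chi (y z : Fin n → Bool) :
    ∑ S, chi n S y * chi n S z = if y = z then (2 : ℝ) ^ n else 0 := by
  simp only [chi_mul_chi, ← powerset_univ, ← prod_add_one]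
  split_ifs with hyz
  · simp [hyz, one_add_one_eq_two]
  · obtain ⟨i, hi⟩ := Function.ne_iff.mp hyz
    exact prod_eq_zero (mem_univ i) (by simp [hi])

lemma sum_fhat_mul_fhat (f g : (Fin n → Bool) → ℝ) :
    ∑ S, fhat n f S * fhat n g S = Ev n (fun x => f x * g x) := by
  have key : ∑ S, (∑ y, f y * chi n S y) * (∑ z, g z * chi n S z) =
      2 ^ n * ∑ y, f y * g y := by
    calc _ = ∑ S, ∑ y, ∑ z, f y * g z * (chi n S y * chi n S z) := by
          refine sum_congr rfl fun S _ => ?_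
          rw [sum_mul_sum]
          exact sum_congr rfl fun y _ => sum_congr rfl fun z _ => by ring
      _ = ∑ y, ∑ z, f y * g z * ∑ S, chi n S y * chi n S z := by
          simp only [mul_sum]
          rw [sum_comm]
          exact sum_congr rfl fun y _ => sum_comm
      _ = 2 ^ n * ∑ y, f y * g y := by simp [sum_chi_mul_chi, mul_sum, mul_comm]
  simp only [fhat, Ev, div_mul_div_comm, ← sum_div, key]
  field_simp

lemma update_not_involutive (i : Fin n) :
    Function.Involutive fun x : Fin n → Bool => Function.update x i (!x i) := by
  intro x
  simp

lemma Ev_comp_update_not (i : Fin n) (h : (Fin n → Bool) → ℝ) :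
    Ev n (fun x => h (Function.update x i (!x i))) = Ev n h := by
  rw [Ev, Ev, (update_not_involutive i).bijective.sum_comp h]

lemma chi_update_not (i : Fin n) (S : Finset (Fin n)) (x : Fin n → Bool) :
    chi n S (Function.update x i (!x i)) = (if i ∈ S then -1 else 1) * chi n S x := by
  split_ifs with hi
  · rw [chi, chi, ← mul_prod_erase S _ hi, ← mul_prod_erase S _ hi,
      prod_congr rfl fun j hj => by rw [Function.update_of_ne (ne_of_mem_erase hj)]]
    cases x i <;> simp
  · rw [one_mul, chi, chi]
    exact prod_congr rfl fun j hj => by rw [Function.update_of_ne (ne_of_mem_of_not_mem hj hi)]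

lemma fhat_Dop (i : Fin n) (f : (Fin n → Bool) → ℝ) (S : Finset (Fin n)) :
    fhat n (Dop n i f) S = if i ∈ S then 2 * fhat n f S else 0 := by
  have flip : Ev n (fun x => f (Function.update x i (!x i)) * chi n S x) =
      (if i ∈ S then -1 else 1) * fhat n f S := by
    rw [← Ev_comp_update_not i]
    simp only [update_not_involutive i _, chi_update_not, fhat, Ev, mul_sum, mul_div_assoc']
    congr 1
    exact sum_congr rfl fun x _ => by ring
  have sub : fhat n (Dop n i f) S =
      fhat n f S - Ev n (fun x => f (Function.update x i (!x i)) * chi n S x) := by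
    simp only [fhat, Ev, Dop, ← sub_div, ← sum_sub_distrib, sub_mul]
  rw [sub, flip]
  split_ifs <;> ring

lemma pD_mul_pD (i : Fin n) (f g : (Fin n → Bool) → ℝ) (x : Fin n → Bool) :
    pD n i f x * pD n i g x = Dop n i f x * Dop n i g x := by
  unfold pD Dop
  cases hx : x i <;> rw [← hx, Function.update_eq_self, hx] <;>
    simp only [Bool.not_false, Bool.not_true]
  · ring

lemma Ev_pD_mul_pD (i : Fin n) (f g : (Fin n → Bool) → ℝ) :
    Ev n (fun x => pD n i f x * pD n i g x) =
      4 * ∑ S ∈ univ.filter (i ∈ ·), fhat n f S * fhat n g S := by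
  simp only [pD_mul_pD, ← sum_fhat_mul_fhat, fhat_Dop, sum_filter, mul_sum]
  refine sum_congr rfl fun S _ => ?_
  split_ifs <;> ring

lemma Inf2_eq_four_mul_sum_fhat_sq (i : Fin n) (f : (Fin n → Bool) → ℝ) :
    Inf2 n i f = 4 * ∑ S ∈ univ.filter (i ∈ ·), fhat n f S ^ 2 := by
  simp only [Inf2, sq_abs]
  simp only [sq, Ev_pD_mul_pD]

lemma fhat_empty (f : (Fin n → Bool) → ℝ) : fhat n f ∅ = Ev n f := by
  simp [fhat, chi]

lemma Ev_mul_sub_Ev_mul_Ev (f g : (Fin n → Bool) → ℝ) :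
    Ev n (fun x => f x * g x) - Ev n f * Ev n g =
      ∑ S ∈ univ.erase ∅, fhat n f S * fhat n g S := by
  rw [← sum_fhat_mul_fhat, ← fhat_empty, ← fhat_empty, ← sum_erase_add _ _ (mem_univ ∅),
    add_sub_cancel_right]

lemma sum_abs_fhat_mul_abs_fhat_le (i : Fin n) (f g : (Fin n → Bool) → ℝ) :
    ∑ S ∈ univ.filter (i ∈ ·), |fhat n f S| * |fhat n g S| ≤
      1 / 4 * √(Inf2 n i f * Inf2 n i g) := by
  calc _ ≤ √(∑ S ∈ univ.filter (i ∈ ·), fhat n f S ^ 2) *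
          √(∑ S ∈ univ.filter (i ∈ ·), fhat n g S ^ 2) := by
        simpa only [sq_abs] using Real.sum_mul_le_sqrt_mul_sqrt _ (|fhat n f ·|) (|fhat n g ·|)
    _ = 1 / 4 * √(Inf2 n i f * Inf2 n i g) := by
        rw [Inf2_eq_four_mul_sum_fhat_sq, Inf2_eq_four_mul_sum_fhat_sq,
          mul_mul_mul_comm, ← sq, Real.sqrt_mul (by positivity), Real.sqrt_sq (by norm_num),
          Real.sqrt_mul (sum_nonneg fun _ _ => sq_nonneg _)]
        ring

end

/-- Two-function Poincaré inequality:
`|E[fg] − E[f]E[g]| ≤ (1/4) ∑_i √(Inf_i[f]·Inf_i[g])`. -/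
theorem two_function_poincare (n : ℕ) (f g : (Fin n → Bool) → ℝ) :
    |Ev n (fun x => f x * g x) - Ev n f * Ev n g| ≤
      (1 / 4) * ∑ i : Fin n, Real.sqrt (Inf2 n i f * Inf2 n i g) := by
  calc _ = |∑ S ∈ univ.erase ∅, fhat n f S * fhat n g S| := by rw [Ev_mul_sub_Ev_mul_Ev]
    _ ≤ ∑ S ∈ univ.erase ∅, |fhat n f S| * |fhat n g S| := by
        simpa only [abs_mul] using abs_sum_le_sum_abs (fun S => fhat n f S * fhat n g S) _
    _ ≤ ∑ i, ∑ S ∈ univ.filter (i ∈ ·), |fhat n f S| * |fhat n g S| :=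
        sum_erase_empty_le_sum_sum_filter_mem _ fun S => by positivity
    _ ≤ ∑ i, 1 / 4 * √(Inf2 n i f * Inf2 n i g) :=
        sum_le_sum fun i _ => sum_abs_fhat_mul_abs_fhat_le i f g
    _ = _ := (mul_sum _ _ _).symm
end

section
/- Let f, g : {0,1}^n → {0,1} be increasing Boolean functions that are both supermodular or both submodular, with E[g] = α ≤ 1/2 and α > 0. Then E[fg] − E[f]E[g] ≥ (α/2)·log₂(1/α)·min_{i ∈ [n]} Inf_i[f]. In particular, if g is additionally antipodal (g(x) = 1 − g(1−x) for all x, so E[g] = 1/2), then E[fg] − E[f]E[g] ≥ (1/4)·min_{i ∈ [n]} Inf_i[f]. -/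
open Finset MeasureTheory

/-!
An increasing supermodular Boolean function `f` has `{f = 1}` closed under `⊓`, so it is `0` or
the indicator of the up-set of its minimum, i.e. an AND `x_T = ∏_{i ∈ T} x_i`; the dual
`1 - f (1 - x)` turns submodular functions into supermodular ones and preserves covariances and
influences. For two ANDs everything is explicit: `Cov(x_T, x_S) = 2^{-|T ∪ S|} - 2^{-|T|-|S|}`,
and `min_i Inf_i[x_T]` vanishes unless `T = [n]`, where the bound reduces to
`(k + 1) 2^{-k} ≤ 1` for `k = |S| = log₂(1/α)`. In the submodular case the dual of `g` is an AND,
so `E[g] = 1 - 2^{-k}`, and `0 < α ≤ 1/2` forces `α = 1/2`; antipodality forces it as well.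
-/

section

variable {n : ℕ}

noncomputable def cov (n : ℕ) (f g : (Fin n → Bool) → ℝ) : ℝ :=
  Ev n (fun x => f x * g x) - Ev n f * Ev n g

noncomputable def andFun (n : ℕ) (S : Finset (Fin n)) (x : Fin n → Bool) : ℝ :=
  ∏ i ∈ S, if x i then 1 else 0

noncomputable def dual (n : ℕ) (f : (Fin n → Bool) → ℝ) (x : Fin n → Bool) : ℝ :=
  1 - f (fun i => !x i)

lemma ev_const (c : ℝ) : Ev n (fun _ => c) = c := by
  simp [Ev]

lemma ev_comp_not (h : (Fin n → Bool) → ℝ) : Ev n (fun x => h (fun i => !x i)) = Ev n h := by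
  unfold Ev
  congr 1
  exact Equiv.sum_comp (Function.Involutive.toPerm _ fun x => funext fun i => Bool.not_not (x i)) h

lemma ev_one_sub (h : (Fin n → Bool) → ℝ) : Ev n (fun x => 1 - h x) = 1 - Ev n h := by
  simp [Ev, sum_sub_distrib, sub_div]

lemma ev_prod (φ : Fin n → Bool → ℝ) :
    Ev n (fun x => ∏ i, φ i (x i)) = ∏ i, (φ i true + φ i false) / 2 := by
  classical
  rw [Ev, ← Fintype.prod_sum, prod_div_distrib]
  simp

lemma ev_dual (f : (Fin n → Bool) → ℝ) : Ev n (dual n f) = 1 - Ev n f := by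
  unfold dual
  rw [ev_comp_not (fun y => 1 - f y), ev_one_sub]

lemma cov_one_sub (f g : (Fin n → Bool) → ℝ) :
    cov n (fun x => 1 - f x) (fun x => 1 - g x) = cov n f g := by
  simp only [cov, Ev, sub_mul, mul_sub, one_mul, mul_one, sum_sub_distrib]
  simp only [sum_const, card_univ, Fintype.card_fun, Fintype.card_bool, Fintype.card_fin]
  field_simp
  ring

lemma cov_dual (f g : (Fin n → Bool) → ℝ) : cov n (dual n f) (dual n g) = cov n f g := by
  rw [← cov_one_sub f g]
  unfold cov dual
  rw [ev_comp_not (fun y => 1 - f y), ev_comp_not (fun y => 1 - g y),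
    ev_comp_not (fun y => (1 - f y) * (1 - g y))]

lemma andFun_eq_zero_or_one (S : Finset (Fin n)) (x : Fin n → Bool) :
    andFun n S x = 0 ∨ andFun n S x = 1 := by
  rw [andFun, prod_boole]
  split_ifs <;> simp

lemma andFun_mul (T S : Finset (Fin n)) (x : Fin n → Bool) :
    andFun n T x * andFun n S x = andFun n (T ∪ S) x := by
  simp only [andFun, prod_boole, forall_mem_union, ite_and, ite_mul, one_mul, zero_mul]
  congr

lemma ev_andFun (S : Finset (Fin n)) : Ev n (andFun n S) = 2⁻¹ ^ #S := by
  have hprod : andFun n S = fun x => ∏ i, if i ∈ S then (if x i then 1 else 0) else 1 := by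
    funext x
    rw [prod_ite_mem, univ_inter, andFun]
  rw [hprod, ev_prod fun i b => if i ∈ S then (if b then 1 else 0) else 1]
  calc ∏ i, _ = ∏ i, if i ∈ S then (2⁻¹ : ℝ) else 1 :=
        prod_congr rfl fun i _ => by by_cases hi : i ∈ S <;> simp [hi]
    _ = 2⁻¹ ^ #S := by rw [prod_ite_mem, univ_inter, prod_const]

lemma cov_andFun (T S : Finset (Fin n)) :
    cov n (andFun n T) (andFun n S) = 2⁻¹ ^ #(T ∪ S) - 2⁻¹ ^ #T * 2⁻¹ ^ #S := by
  simp only [cov, andFun_mul, ev_andFun]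

lemma cov_andFun_nonneg (T S : Finset (Fin n)) : 0 ≤ cov n (andFun n T) (andFun n S) := by
  rw [cov_andFun, ← pow_add, sub_nonneg]
  exact pow_le_pow_of_le_one (by norm_num) (by norm_num) (card_union_le T S)

lemma andFun_update_of_notMem {T : Finset (Fin n)} {i : Fin n} (hi : i ∉ T) (x : Fin n → Bool)
    (b : Bool) : andFun n T (Function.update x i b) = andFun n T x :=
  prod_congr rfl fun j hj => by rw [Function.update_of_ne (ne_of_mem_of_not_mem hj hi)]

lemma andFun_eq_mul_erase {T : Finset (Fin n)} {i : Fin n} (hi : i ∈ T) (x : Fin n → Bool) :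
    andFun n T x = (if x i then 1 else 0) * andFun n (T.erase i) x :=
  (mul_prod_erase T _ hi).symm

lemma infB_andFun_of_notMem {T : Finset (Fin n)} {i : Fin n} (hi : i ∉ T) :
    InfB n i (andFun n T) = 0 := by
  simp only [InfB, andFun_update_of_notMem hi, if_true, ev_const]

lemma infB_andFun_of_mem {T : Finset (Fin n)} {i : Fin n} (hi : i ∈ T) :
    InfB n i (andFun n T) = 2 * 2⁻¹ ^ #T := by
  have key : ∀ x, (if andFun n T x = andFun n T (Function.update x i (!x i)) then 0 else 1)
      = andFun n (T.erase i) x := by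
    intro x
    rw [andFun_eq_mul_erase hi, andFun_eq_mul_erase hi, Function.update_self,
      andFun_update_of_notMem (notMem_erase i T)]
    rcases andFun_eq_zero_or_one (T.erase i) x with h | h <;> cases x i <;> simp [h]
  rw [InfB, funext key, ev_andFun, ← card_erase_add_one hi, pow_succ]
  ring

lemma infB_dual (i : Fin n) (f : (Fin n → Bool) → ℝ) : InfB n i (dual n f) = InfB n i f := by
  have hflip : ∀ x : Fin n → Bool, (fun j => !Function.update x i (!x i) j)
      = Function.update (fun j => !x j) i (!!x i) := by
    intro x
    funext j
    rcases eq_or_ne j i with rfl | hne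
    · simp
    · simp [Function.update_of_ne hne]
  simp only [InfB, dual, hflip, sub_right_inj]
  exact ev_comp_not (fun y => if f y = f (Function.update y i (!y i)) then 0 else 1)

lemma dual_eq_zero_or_one {f : (Fin n → Bool) → ℝ} (hf01 : ∀ x, f x = 0 ∨ f x = 1)
    (x : Fin n → Bool) : dual n f x = 0 ∨ dual n f x = 1 := by
  rcases hf01 (fun i => !x i) with h | h <;> simp [dual, h]

lemma Increasing'.dual {f : (Fin n → Bool) → ℝ} (hf : Increasing' n f) :
    Increasing' n (dual n f) := by
  intro x y hxy
  have := hf (fun i => !y i) (fun i => !x i) fun i => compl_le_compl (hxy i)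
  show 1 - f _ ≤ 1 - f _
  linarith

lemma Submodular'.dual {f : (Fin n → Bool) → ℝ} (hf : Submodular' n f) :
    Supermodular' n (dual n f) := by
  intro x y
  have := hf (fun i => !x i) (fun i => !y i)
  show 1 - f _ + (1 - f _) ≤ 1 - f _ + (1 - f _)
  simp only [Bool.not_and, Bool.not_or]
  linarith

lemma eq_zero_or_eq_andFun_of_supermodular {f : (Fin n → Bool) → ℝ}
    (hf01 : ∀ x, f x = 0 ∨ f x = 1) (hf : Increasing' n f) (hsup : Supermodular' n f) :
    f = 0 ∨ ∃ T, f = andFun n T := by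
  by_cases h0 : ∀ x, f x = 0
  · exact Or.inl (funext h0)
  obtain ⟨x₀, hx₀⟩ := not_forall.mp h0
  set A := univ.filter fun x => f x = 1
  have hA : A.Nonempty := ⟨x₀, by simpa [A] using (hf01 x₀).resolve_left hx₀⟩
  have hmeet : ∀ x ∈ {z | f z = 1}, ∀ y ∈ {z | f z = 1}, x ⊓ y ∈ {z | f z = 1} := by
    intro x (hx : f x = 1) y (hy : f y = 1)
    have hsum : f x + f y ≤ f (x ⊓ y) + f (x ⊔ y) := hsup x y
    refine (hf01 (x ⊓ y)).resolve_left fun h => ?_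
    rcases hf01 (x ⊔ y) with h' | h' <;> linarith
  set m := A.inf' hA id
  have hm : f m = 1 := inf'_mem _ hmeet A hA id fun x hx => by simpa [A] using hx
  have hmin : ∀ x, f x = 1 → m ≤ x := fun x hx => inf'_le id (by simpa [A] using hx)
  refine Or.inr ⟨univ.filter (m · = true), funext fun x => ?_⟩
  have hle : m ≤ x ↔ ∀ i ∈ univ.filter (m · = true), x i = true := by
    simp [Pi.le_def, Bool.le_iff_imp]
  rw [andFun, prod_boole]
  split_ifs with hmx
  · have := hf m x (hle.2 hmx)
    rcases hf01 x with h | h <;> linarith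
  · exact (hf01 x).resolve_right fun h => hmx (hle.1 (hmin x h))

lemma cov_andFun_ge (T S : Finset (Fin n)) :
    2⁻¹ ^ #S / 2 * #S * ⨅ i, InfB n i (andFun n T) ≤ cov n (andFun n T) (andFun n S) := by
  rcases S.eq_empty_or_nonempty with rfl | ⟨i₀, -⟩
  · simpa using cov_andFun_nonneg T ∅
  have hbdd : BddBelow (Set.range fun i => InfB n i (andFun n T)) :=
    (Set.finite_range _).bddBelow
  by_cases hT : T = univ
  · subst hT
    have hk : ((#S : ℝ) + 1) * 2⁻¹ ^ #S ≤ 1 := by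
      rw [inv_pow, ← div_eq_mul_inv, div_le_one (by positivity)]
      exact_mod_cast Nat.lt_two_pow_self
    have hp : (0 : ℝ) ≤ 2⁻¹ ^ #(univ : Finset (Fin n)) := by positivity
    calc _ ≤ (2⁻¹ : ℝ) ^ #S / 2 * #S * (2 * 2⁻¹ ^ #(univ : Finset (Fin n))) := by
          gcongr
          exact (ciInf_le hbdd i₀).trans_eq (infB_andFun_of_mem (mem_univ i₀))
      _ ≤ (2⁻¹ : ℝ) ^ #(univ ∪ S) - 2⁻¹ ^ #(univ : Finset (Fin n)) * 2⁻¹ ^ #S := by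
          rw [union_eq_left.mpr (subset_univ S)]
          nlinarith
      _ = _ := (cov_andFun _ _).symm
  · obtain ⟨j, hj⟩ := not_forall.mp (mt eq_univ_iff_forall.mpr hT)
    calc _ ≤ (2⁻¹ : ℝ) ^ #S / 2 * #S * 0 := by
          gcongr
          exact (ciInf_le hbdd j).trans_eq (infB_andFun_of_notMem hj)
      _ = 0 := mul_zero _
      _ ≤ _ := cov_andFun_nonneg T S

lemma cov_ge_of_supermodular {f g : (Fin n → Bool) → ℝ}
    (hf01 : ∀ x, f x = 0 ∨ f x = 1) (hg01 : ∀ x, g x = 0 ∨ g x = 1)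
    (hf : Increasing' n f) (hg : Increasing' n g)
    (hfsup : Supermodular' n f) (hgsup : Supermodular' n g) :
    Ev n g / 2 * Real.logb 2 (1 / Ev n g) * ⨅ i, InfB n i f ≤ cov n f g := by
  rcases eq_zero_or_eq_andFun_of_supermodular hf01 hf hfsup with rfl | ⟨T, rfl⟩
  · simp [cov, InfB, Ev]
  rcases eq_zero_or_eq_andFun_of_supermodular hg01 hg hgsup with rfl | ⟨S, rfl⟩
  · simp [cov, Ev]
  have hlog : Real.logb 2 (1 / 2⁻¹ ^ #S) = #S := by
    rw [one_div, inv_pow, inv_inv, Real.logb_pow, Real.logb_self_eq_one one_lt_two, mul_one]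
  rw [ev_andFun, hlog]
  exact cov_andFun_ge T S

lemma ev_eq_half_of_submodular {g : (Fin n → Bool) → ℝ} (hg01 : ∀ x, g x = 0 ∨ g x = 1)
    (hg : Increasing' n g) (hgsub : Submodular' n g) (hpos : 0 < Ev n g) (hle : Ev n g ≤ 1 / 2) :
    Ev n g = 1 / 2 := by
  rcases eq_zero_or_eq_andFun_of_supermodular (dual_eq_zero_or_one hg01) hg.dual hgsub.dual
    with h | ⟨S, h⟩
  · have : Ev n (dual n g) = 0 := by simp [h, Ev]
    rw [ev_dual] at this
    linarith
  · have := ev_dual g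
    rw [h, ev_andFun] at this
    rcases Nat.lt_or_ge #S 2 with hS | hS
    · interval_cases #S <;> norm_num at this <;> linarith
    · have : (2⁻¹ : ℝ) ^ #S ≤ 2⁻¹ ^ 2 := pow_le_pow_of_le_one (by norm_num) (by norm_num) hS
      linarith

end

theorem chvatal_type_correlation_general (n : ℕ) (f g : (Fin n → Bool) → ℝ)
    (hf01 : ∀ x, f x = 0 ∨ f x = 1) (hg01 : ∀ x, g x = 0 ∨ g x = 1)
    (hf : Increasing' n f) (hg : Increasing' n g)
    (hmod : (Supermodular' n f ∧ Supermodular' n g) ∨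
            (Submodular' n f ∧ Submodular' n g))
    (α : ℝ) (hα : Ev n g = α) (hα0 : 0 < α) (hα2 : α ≤ 1 / 2) :
    (Ev n (fun x => f x * g x) - Ev n f * Ev n g ≥
        (α / 2) * Real.logb 2 (1 / α) * ⨅ i : Fin n, InfB n i f)
    ∧ ((∀ x, g x = 1 - g (fun i => ! x i)) →
        Ev n (fun x => f x * g x) - Ev n f * Ev n g ≥
          (1 / 4) * ⨅ i : Fin n, InfB n i f) := by
  subst hα
  have hmain : Ev n g / 2 * Real.logb 2 (1 / Ev n g) * ⨅ i, InfB n i f ≤ cov n f g := by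
    rcases hmod with ⟨hfsup, hgsup⟩ | ⟨hfsub, hgsub⟩
    · exact cov_ge_of_supermodular hf01 hg01 hf hg hfsup hgsup
    · have hhalf := ev_eq_half_of_submodular hg01 hg hgsub hα0 hα2
      have hdual := cov_ge_of_supermodular (dual_eq_zero_or_one hf01)
        (dual_eq_zero_or_one hg01) hf.dual hg.dual hfsub.dual hgsub.dual
      rw [hhalf]
      rwa [cov_dual, ev_dual, hhalf, show (1 : ℝ) - 1 / 2 = 1 / 2 by norm_num,
        funext fun i => infB_dual i f] at hdual
  refine ⟨hmain, fun hanti => ?_⟩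
  have hhalf : Ev n g = 1 / 2 := by
    have := ev_dual g
    rw [show dual n g = g from (funext hanti).symm] at this
    linarith
  have hcoef : (1 / 2 : ℝ) / 2 * Real.logb 2 (1 / (1 / 2)) = 1 / 4 := by
    norm_num [Real.logb_self_eq_one]
  rwa [hhalf, hcoef] at hmain

/-- Chvátal-type correlation estimate in the super/submodular regime:
if `E[g] = α ∈ (0, 1/2]` then `Cov(f,g) ≥ (α/2) log₂(1/α) · min_i Inf_i[f]`, and if `g`
is moreover antipodal then `Cov(f,g) ≥ (1/4) · min_i Inf_i[f]`. -/
theorem chvatal_type_correlation (n : ℕ) (hn : 0 < n) (f g : (Fin n → Bool) → ℝ)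
    (hf01 : ∀ x, f x = 0 ∨ f x = 1) (hg01 : ∀ x, g x = 0 ∨ g x = 1)
    (hf : Increasing' n f) (hg : Increasing' n g)
    (hmod : (Supermodular' n f ∧ Supermodular' n g) ∨
            (Submodular' n f ∧ Submodular' n g))
    (α : ℝ) (hα : Ev n g = α) (hα0 : 0 < α) (hα2 : α ≤ 1 / 2) :
    (Ev n (fun x => f x * g x) - Ev n f * Ev n g ≥
        (α / 2) * Real.logb 2 (1 / α) * ⨅ i : Fin n, InfB n i f)
    ∧ ((∀ x, g x = 1 - g (fun i => ! x i)) →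
        Ev n (fun x => f x * g x) - Ev n f * Ev n g ≥
          (1 / 4) * ⨅ i : Fin n, InfB n i f) :=
  chvatal_type_correlation_general n f g hf01 hg01 hf hg hmod α hα hα0 hα2
end
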